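/- arXiv:2301.06209 — 2 statements merged into one kernel-verified Lean document; each statement's English description precedes it below -/
import Mathlib

section
/- Let K_A and K_B be finite Kripke structures over AP and let Pred ⊆ 2^AP × 2^AP be a relational predicate. Then the following are equivalent: (i) for every trace t ∈ Traces(K_A) there exists a trace t' ∈ Traces(K_B) such that Pred(t(i), t'(i)) holds for all i ∈ ℕ; (ii) for every lasso trace t ∈ LassoTraces(K_A) there exists a lasso trace t' ∈ LassoTraces(K_B) such that Pred(t(i), t'(i)) holds for all i ∈ ℕ. -/
/-- A Kripke structure over state type `S` and atomic propositions `α`: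
a nonempty set of initial states, a total transition relation, and a labeling. -/
structure Kripke (S : Type) (α : Type) where
  init : Set S
  init_nonempty : init.Nonempty
  delta : S → S → Prop
  total : ∀ s, ∃ s', delta s s'
  L : S → Set α

/-- A path of a Kripke structure. -/
def Kripke.IsPath {S α : Type} (K : Kripke S α) (p : ℕ → S) : Prop :=
  p 0 ∈ K.init ∧ ∀ i, K.delta (p i) (p (i + 1))

/-- The set of traces of a Kripke structure. -/
def Kripke.Traces {S α : Type} (K : Kripke S α) : Set (ℕ → Set α) :=
  {t | ∃ p, K.IsPath p ∧ ∀ i, t i = K.L (p i)}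

/-- Index of the state visited at time `i` by the infinite unrolling of a lasso path
`s 0, …, s ℓ` with loopback index `n` (follow `s 0 … s ℓ`, then repeat `s n … s ℓ`). -/
def lassoIdx (n ℓ i : ℕ) : ℕ :=
  if i ≤ ℓ then i else n + (i - n) % (ℓ + 1 - n)

/-- The set of lasso traces of a Kripke structure: traces of infinite unrollings of
lasso paths `s 0, …, s ℓ` with `(s ℓ, s n) ∈ δ` for some `0 ≤ n < ℓ`. -/
def Kripke.LassoTraces {S α : Type} (K : Kripke S α) : Set (ℕ → Set α) :=
  {t | ∃ (s : ℕ → S) (n ℓ : ℕ), n < ℓ ∧ s 0 ∈ K.init ∧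
    (∀ i, i < ℓ → K.delta (s i) (s (i + 1))) ∧ K.delta (s ℓ) (s n) ∧
    ∀ i, t i = K.L (s (lassoIdx n ℓ i))}

/- ### Auxiliary lemmas about `lassoIdx` -/

lemma lassoIdx_of_le {n ℓ i : ℕ} (h : i ≤ ℓ) : lassoIdx n ℓ i = i := by
  unfold lassoIdx; rw [if_pos h]

lemma lassoIdx_succ {n ℓ : ℕ} (h : n < ℓ) (i : ℕ) :
    (lassoIdx n ℓ i < ℓ ∧ lassoIdx n ℓ (i + 1) = lassoIdx n ℓ i + 1) ∨
    (lassoIdx n ℓ i = ℓ ∧ lassoIdx n ℓ (i + 1) = n) := by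
  unfold lassoIdx
  rcases le_or_gt (i + 1) ℓ with h1 | h1
  · left
    rw [if_pos (by omega), if_pos h1]
    omega
  rcases le_or_gt i ℓ with h2 | h2
  · right
    have hi : i = ℓ := by omega
    subst hi
    rw [if_pos h2, if_neg (by omega)]
    refine ⟨rfl, ?_⟩
    rw [Nat.mod_self]
    omega
  · have hc2 : 2 ≤ ℓ + 1 - n := by omega
    have hdm := Nat.div_add_mod (i - n) (ℓ + 1 - n)
    have hrc : (i - n) % (ℓ + 1 - n) < ℓ + 1 - n := Nat.mod_lt _ (by omega)
    rw [if_neg (by omega), if_neg (by omega)]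
    rcases lt_or_eq_of_le (Nat.succ_le_of_lt hrc) with hlt | heq
    · left
      have e : i + 1 - n = (ℓ + 1 - n) * ((i - n) / (ℓ + 1 - n)) + ((i - n) % (ℓ + 1 - n) + 1) := by
        omega
      rw [e, Nat.mul_add_mod, Nat.mod_eq_of_lt hlt]
      omega
    · right
      have e : i + 1 - n = (ℓ + 1 - n) * ((i - n) / (ℓ + 1 - n)) + (ℓ + 1 - n) := by omega
      rw [e, Nat.mul_add_mod, Nat.mod_self]
      omega

lemma lassoIdx_add_period {n ℓ : ℕ} (h : n < ℓ) {i : ℕ} (hi : n ≤ i) :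
    lassoIdx n ℓ (i + (ℓ + 1 - n)) = lassoIdx n ℓ i := by
  unfold lassoIdx
  rw [if_neg (by omega)]
  have e : i + (ℓ + 1 - n) - n = (i - n) + (ℓ + 1 - n) := by omega
  rw [e, Nat.add_mod_right]
  split
  · next hle => rw [Nat.mod_eq_of_lt (by omega)]; omega
  · rfl

lemma lassoIdx_add_mul {n ℓ : ℕ} (h : n < ℓ) {i : ℕ} (hi : n ≤ i) (k : ℕ) :
    lassoIdx n ℓ (i + k * (ℓ + 1 - n)) = lassoIdx n ℓ i := by
  induction k with
  | zero => simp
  | succ k ih =>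
    have e : i + (k + 1) * (ℓ + 1 - n) = (i + k * (ℓ + 1 - n)) + (ℓ + 1 - n) := by ring
    rw [e, lassoIdx_add_period h (by omega), ih]

/-- The infinite unrolling of a lasso path is a path. -/
lemma unroll_isPath {S α : Type} (K : Kripke S α) {s : ℕ → S} {n ℓ : ℕ}
    (hnl : n < ℓ) (h0 : s 0 ∈ K.init)
    (hstep : ∀ i, i < ℓ → K.delta (s i) (s (i + 1)))
    (hback : K.delta (s ℓ) (s n)) :
    K.IsPath (fun i => s (lassoIdx n ℓ i)) := by
  constructor
  · simpa [lassoIdx] using h0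
  · intro i
    show K.delta (s (lassoIdx n ℓ i)) (s (lassoIdx n ℓ (i + 1)))
    rcases lassoIdx_succ hnl i with ⟨h1, h2⟩ | ⟨h1, h2⟩
    · rw [h2]; exact hstep _ h1
    · rw [h1, h2]; exact hback

/-- Every finite prefix of a path of a finite Kripke structure extends to a lasso trace. -/
lemma exists_lasso_prefix {S α : Type} [Fintype S] (K : Kripke S α) {p : ℕ → S}
    (hp : K.IsPath p) (m : ℕ) :
    ∃ tL ∈ K.LassoTraces, ∀ i ≤ m, tL i = K.L (p i) := by
  obtain ⟨x, y, hlt, heq⟩ : ∃ x y : ℕ, x < y ∧ p (m + 1 + x) = p (m + 1 + y) := by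
    obtain ⟨x, y, hxy, hf⟩ := Finite.exists_ne_map_eq_of_infinite (fun k : ℕ => p (m + 1 + k))
    rcases lt_or_gt_of_ne hxy with hh | hh
    exacts [⟨x, y, hh, hf⟩, ⟨y, x, hh, hf.symm⟩]
  set i := m + 1 + x with hi
  set j := m + 1 + y with hj
  by_cases hj1 : j = i + 1
  · refine ⟨fun k => K.L (p (lassoIdx i (i + 1) k)),
      ⟨p, i, i + 1, by omega, hp.1, fun k _ => hp.2 k, ?_, fun k => rfl⟩, ?_⟩
    · rw [hj1] at heq
      have h2 := hp.2 i
      rw [heq] at h2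
      rw [heq]
      exact h2
    · intro k hk
      show K.L (p (lassoIdx i (i + 1) k)) = K.L (p k)
      rw [lassoIdx_of_le (show k ≤ i + 1 by omega)]
  · have hij2 : i + 2 ≤ j := by omega
    refine ⟨fun k => K.L (p (lassoIdx i (j - 1) k)),
      ⟨p, i, j - 1, by omega, hp.1, fun k _ => hp.2 k, ?_, fun k => rfl⟩, ?_⟩
    · have h2 := hp.2 (j - 1)
      rw [show j - 1 + 1 = j from by omega] at h2
      rw [heq]
      exact h2
    · intro k hk
      show K.L (p (lassoIdx i (j - 1) k)) = K.L (p k)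
      rw [lassoIdx_of_le (show k ≤ j - 1 by omega)]

/-- König-style argument: if for every `m` there is a path of `KB` matching `t`
(via `Pred`) up to time `m`, then there is a path matching `t` everywhere. -/
lemma koenig_matching {S₂ α : Type} [Fintype S₂] (KB : Kripke S₂ α)
    (Pred : Set α → Set α → Prop) (t : ℕ → Set α)
    (H : ∀ m, ∃ q, KB.IsPath q ∧ ∀ i ≤ m, Pred (t i) (KB.L (q i))) :
    ∃ q, KB.IsPath q ∧ ∀ i, Pred (t i) (KB.L (q i)) := by
  classical
  -- `Ext k b` : from state `b` at time `k` there are matching continuations of all lengths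
  set Ext : ℕ → S₂ → Prop := fun k b => ∀ m, ∃ q : ℕ → S₂, q k = b ∧
      (∀ i, k ≤ i → i < k + m → KB.delta (q i) (q (i + 1))) ∧
      (∀ i, k ≤ i → i ≤ k + m → Pred (t i) (KB.L (q i))) with hExt
  have hPredOf : ∀ k b, Ext k b → Pred (t k) (KB.L b) := by
    intro k b hb
    obtain ⟨q, h1, _, h3⟩ := hb 0
    have h4 := h3 k le_rfl (by omega)
    rwa [h1] at h4
  -- base
  choose Q hQ1 hQ2 using H
  obtain ⟨b0, hb0inf⟩ := Finite.exists_infinite_fiber (fun m => Q m 0)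
  have hb0inf' : {m : ℕ | Q m 0 = b0}.Infinite := Set.infinite_coe_iff.mp hb0inf
  obtain ⟨m0, hm0⟩ := hb0inf'.nonempty
  have hm0' : Q m0 0 = b0 := hm0
  have hb0init : b0 ∈ KB.init := by rw [← hm0']; exact (hQ1 m0).1
  have hb0ext : Ext 0 b0 := by
    intro m
    obtain ⟨m', hm', hmm'⟩ := hb0inf'.exists_gt m
    exact ⟨Q m', hm', fun i _ _ => (hQ1 m').2 i, fun i _ hi => hQ2 m' i (by omega)⟩
  -- step
  have hstepE : ∀ k b, Ext k b → ∃ b', KB.delta b b' ∧ Ext (k + 1) b' := by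
    intro k b hb
    choose q hq1 hq2 hq3 using hb
    obtain ⟨b', hb'inf⟩ := Finite.exists_infinite_fiber (fun m => q (m + 1) (k + 1))
    have hinf' : {m : ℕ | q (m + 1) (k + 1) = b'}.Infinite := Set.infinite_coe_iff.mp hb'inf
    obtain ⟨m0, hm0⟩ := hinf'.nonempty
    have hm0' : q (m0 + 1) (k + 1) = b' := hm0
    refine ⟨b', ?_, ?_⟩
    · have h5 := hq2 (m0 + 1) k le_rfl (by omega)
      rwa [hq1 (m0 + 1), hm0'] at h5
    · intro m
      obtain ⟨m', hm', hmm'⟩ := hinf'.exists_gt m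
      exact ⟨q (m' + 1), hm', fun i h1 h2 => hq2 (m' + 1) i (by omega) (by omega),
        fun i h1 h2 => hq3 (m' + 1) i (by omega) (by omega)⟩
  choose step hstep1 hstep2 using hstepE
  let F : ∀ k : ℕ, {b : S₂ // Ext k b} :=
    fun k => Nat.rec ⟨b0, hb0ext⟩ (fun k ih => ⟨step k ih.1 ih.2, hstep2 k ih.1 ih.2⟩) k
  exact ⟨fun k => (F k).1, ⟨hb0init, fun k => hstep1 k (F k).1 (F k).2⟩,
    fun k => hPredOf k _ (F k).2⟩

/-- `⟨K_A, K_B⟩ ⊨ ∀π.∃π\'. □Pred` holds over all traces iff it holds over lasso traces. -/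
theorem lasso_traces_forall_exists_equiv {S₁ S₂ α : Type}
    [Fintype S₁] [Fintype S₂] [Fintype α]
    (KA : Kripke S₁ α) (KB : Kripke S₂ α) (Pred : Set α → Set α → Prop) :
    (∀ t ∈ KA.Traces, ∃ t' ∈ KB.Traces, ∀ i, Pred (t i) (t' i)) ↔
    (∀ t ∈ KA.LassoTraces, ∃ t' ∈ KB.LassoTraces, ∀ i, Pred (t i) (t' i)) := by
  constructor
  · rintro h t ⟨s, n, ℓ, hnl, h0, hstep, hback, hts⟩
    have hq := unroll_isPath KA hnl h0 hstep hback
    obtain ⟨t', ⟨p', hp', ht'⟩, hPred⟩ := h t ⟨_, hq, hts⟩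
    have hc2 : 2 ≤ ℓ + 1 - n := by omega
    obtain ⟨a, b, hab, hfab⟩ : ∃ a b : ℕ, a < b ∧
        p' (ℓ + 1 + a * (ℓ + 1 - n)) = p' (ℓ + 1 + b * (ℓ + 1 - n)) := by
      obtain ⟨x, y, hxy, hf⟩ :=
        Finite.exists_ne_map_eq_of_infinite (fun k : ℕ => p' (ℓ + 1 + k * (ℓ + 1 - n)))
      rcases lt_or_gt_of_ne hxy with hh | hh
      exacts [⟨x, y, hh, hf⟩, ⟨y, x, hh, hf.symm⟩]
    set i := ℓ + 1 + a * (ℓ + 1 - n) with hidef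
    set j := ℓ + 1 + b * (ℓ + 1 - n) with hjdef
    have hcle : (ℓ + 1 - n) ≤ (b - a) * (ℓ + 1 - n) :=
      Nat.le_mul_of_pos_left _ (by omega)
    have hji : j - i = (b - a) * (ℓ + 1 - n) := by
      have h6 : (b - a) * (ℓ + 1 - n) = b * (ℓ + 1 - n) - a * (ℓ + 1 - n) :=
        Nat.sub_mul b a (ℓ + 1 - n)
      have h7 : a * (ℓ + 1 - n) ≤ b * (ℓ + 1 - n) :=
        Nat.mul_le_mul_right _ (le_of_lt hab)
      omega
    have hij2 : i + 2 ≤ j := by omega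
    have key : ∀ m, lassoIdx n ℓ (lassoIdx i (j - 1) m) = lassoIdx n ℓ m := by
      intro m
      by_cases hm : m ≤ j - 1
      · rw [lassoIdx_of_le hm]
      · have hg : lassoIdx i (j - 1) m = i + (m - i) % (j - i) := by
          unfold lassoIdx
          rw [if_neg hm, show j - 1 + 1 - i = j - i from by omega]
        have hdm := Nat.div_add_mod (m - i) (j - i)
        have hrlt : (m - i) % (j - i) < j - i := Nat.mod_lt _ (by omega)
        have hme : m = (i + (m - i) % (j - i)) + ((b - a) * ((m - i) / (j - i))) * (ℓ + 1 - n) := by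
          have h1 : (j - i) * ((m - i) / (j - i)) =
              ((b - a) * ((m - i) / (j - i))) * (ℓ + 1 - n) := by
            rw [hji]; ring
          omega
        rw [hg]
        conv_rhs => rw [hme]
        rw [lassoIdx_add_mul hnl (by omega) ((b - a) * ((m - i) / (j - i)))]
    refine ⟨fun m => KB.L (p' (lassoIdx i (j - 1) m)),
      ⟨p', i, j - 1, by omega, hp'.1, fun k _ => hp'.2 k, ?_, fun m => rfl⟩, ?_⟩
    · have h2 := hp'.2 (j - 1)
      rw [show j - 1 + 1 = j from by omega] at h2
      rw [hfab]
      exact h2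
    · intro m
      have h5 := hPred (lassoIdx i (j - 1) m)
      rw [ht' (lassoIdx i (j - 1) m)] at h5
      rw [hts (lassoIdx i (j - 1) m), key m, ← hts m] at h5
      exact h5
  · rintro h t ⟨p, hp, htp⟩
    have H : ∀ m, ∃ q, KB.IsPath q ∧ ∀ i ≤ m, Pred (t i) (KB.L (q i)) := by
      intro m
      obtain ⟨tL, htL, htLp⟩ := exists_lasso_prefix KA hp m
      obtain ⟨t', ht', hPred⟩ := h tL htL
      obtain ⟨s', n', ℓ', hnl', h0', hstep', hback', hts'⟩ := ht'
      refine ⟨fun k => s' (lassoIdx n' ℓ' k), unroll_isPath KB hnl' h0' hstep' hback', ?_⟩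
      intro i hi
      have h5 := hPred i
      rw [hts' i, htLp i hi] at h5
      rw [htp i]
      exact h5
    obtain ⟨q, hq, hqP⟩ := koenig_matching KB Pred t H
    exact ⟨fun i => KB.L (q i), ⟨q, hq, fun i => rfl⟩, hqP⟩
end

section
/- Let K be a finite Kripke structure over AP and let A be a nondeterministic Büchi automaton over the alphabet 2^AP. If some trace of K is accepted by A (i.e., Traces(K) ∩ L(A) ≠ ∅), then some lasso trace of K is accepted by A (i.e., LassoTraces(K) ∩ L(A) ≠ ∅). -/
/-- A nondeterministic Büchi automaton over alphabet `A` with state type `Q`. -/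
structure NBW (A : Type) (Q : Type) where
  Q0 : Set Q
  F : Set Q
  delta : Q → A → Q → Prop

/-- `M` accepts `w` if some run on `w` starting in `Q0` visits `F` infinitely often. -/
def NBW.Accepts {A Q : Type} (M : NBW A Q) (w : ℕ → A) : Prop :=
  ∃ r : ℕ → Q, r 0 ∈ M.Q0 ∧ (∀ i, M.delta (r i) (w i) (r (i + 1))) ∧
    ∀ N, ∃ i, N ≤ i ∧ r i ∈ M.F

lemma lassoIdx_step (n ℓ : ℕ) (h : n < ℓ) (i : ℕ) :
    (lassoIdx n ℓ i < ℓ ∧ lassoIdx n ℓ (i+1) = lassoIdx n ℓ i + 1) ∨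
    (lassoIdx n ℓ i = ℓ ∧ lassoIdx n ℓ (i+1) = n) := by
  unfold lassoIdx
  rcases lt_trichotomy i ℓ with hi | hi | hi
  · left; rw [if_pos (by omega), if_pos (by omega)]; omega
  · right; subst hi
    rw [if_pos (le_refl _), if_neg (by omega)]
    rw [show i + 1 - n = i + 1 - n by rfl]
    have : i + 1 - n = i + 1 - n := rfl
    rw [show i + 1 - n = (i + 1 - n) by rfl]
    have h0 : (i + 1 - n) % (i + 1 - n) = 0 := Nat.mod_self _
    omega
  · rw [if_neg (by omega), if_neg (by omega)]
    set d := ℓ + 1 - n with hd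
    have hd2 : 2 ≤ d := by omega
    obtain ⟨c, hc⟩ : ∃ c, (i - n) % d = c := ⟨_, rfl⟩
    have hmod : c < d := hc ▸ Nat.mod_lt _ (by omega)
    have h1 : (i + 1 - n) % d = (c + 1) % d := by
      rw [show i + 1 - n = (i - n) + 1 by omega, Nat.add_mod, hc,
        Nat.mod_eq_of_lt (show 1 < d by omega)]
    rcases eq_or_lt_of_le (Nat.succ_le_of_lt hmod) with he | hlt
    · right
      have h2 : (c + 1) % d = 0 := by
        rw [show c + 1 = d by omega]; exact Nat.mod_self d
      rw [hc, h1, h2]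
      omega
    · left
      have h2 : (c + 1) % d = c + 1 := Nat.mod_eq_of_lt hlt
      rw [hc, h1, h2]
      omega

/-- If some trace of a finite Kripke structure `K` is accepted by the Büchi automaton
`M` over alphabet `2^AP`, then some lasso trace of `K` is accepted by `M`. -/
theorem trace_accepted_implies_lasso_accepted {S α Q : Type}
    [Fintype S] [Fintype α] [Fintype Q] [Nonempty Q]
    (K : Kripke S α) (M : NBW (Set α) Q)
    (h : ∃ t ∈ K.Traces, M.Accepts t) :
    ∃ t ∈ K.LassoTraces, M.Accepts t := by
  obtain ⟨t, ⟨p, ⟨hp0, hpd⟩, ht⟩, r, hr0, hrd, hrF⟩ := h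
  have hTinf : {i : ℕ | r i ∈ M.F}.Infinite := by
    apply Set.infinite_of_not_bddAbove
    rintro ⟨N, hN⟩
    obtain ⟨i, hNi, hiF⟩ := hrF (N + 1)
    have := hN hiF
    omega
  have hfib : ∃ v : S × Q, {i : ℕ | r i ∈ M.F ∧ (p i, r i) = v}.Infinite := by
    by_contra hc
    push_neg at hc
    have hsub : {i : ℕ | r i ∈ M.F} ⊆
        ⋃ v ∈ (Finset.univ : Finset (S × Q)), {i : ℕ | r i ∈ M.F ∧ (p i, r i) = v} := by
      intro i hi
      simp only [Finset.mem_univ, Set.mem_iUnion, Set.mem_setOf_eq]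
      exact ⟨(p i, r i), trivial, hi, rfl⟩
    exact hTinf ((Set.Finite.biUnion (Finset.finite_toSet _) (fun v _ => hc v)).subset hsub)
  obtain ⟨v, hv⟩ := hfib
  obtain ⟨n, hn⟩ := hv.nonempty
  obtain ⟨m, hm, hnm⟩ := hv.exists_gt (n + 1)
  obtain ⟨ℓ, rfl⟩ : ∃ ℓ, m = ℓ + 1 := ⟨m - 1, by omega⟩
  have hnℓ : n < ℓ := by omega
  have hpeq : p n = p (ℓ + 1) :=
    congrArg Prod.fst (hn.2.trans hm.2.symm)
  have hreq : r n = r (ℓ + 1) :=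
    congrArg Prod.snd (hn.2.trans hm.2.symm)
  have hrnF : r n ∈ M.F := hn.1
  refine ⟨fun i => K.L (p (lassoIdx n ℓ i)), ⟨p, n, ℓ, hnℓ, hp0, fun i _ => hpd i, ?_,
    fun i => rfl⟩, fun i => r (lassoIdx n ℓ i), ?_, ?_, ?_⟩
  · have := hpd ℓ
    rwa [← hpeq] at this
  · show r (lassoIdx n ℓ 0) ∈ M.Q0
    have h0 : lassoIdx n ℓ 0 = 0 := by unfold lassoIdx; rw [if_pos (by omega)]
    rw [h0]; exact hr0
  · intro i
    show M.delta (r (lassoIdx n ℓ i)) (K.L (p (lassoIdx n ℓ i))) (r (lassoIdx n ℓ (i + 1)))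
    rcases lassoIdx_step n ℓ hnℓ i with ⟨_, hstep⟩ | ⟨hi, hstep⟩
    · rw [hstep]
      have := hrd (lassoIdx n ℓ i)
      rwa [ht (lassoIdx n ℓ i)] at this
    · rw [hi, hstep, hreq]
      have := hrd ℓ
      rwa [ht ℓ] at this
  · intro N
    have hd2 : 2 ≤ ℓ + 1 - n := by omega
    have h1 : (ℓ + 1 - n) ≤ (N + 1) * (ℓ + 1 - n) := Nat.le_mul_of_pos_left _ (by omega)
    have h2 : N + 1 ≤ (N + 1) * (ℓ + 1 - n) := Nat.le_mul_of_pos_right _ (by omega)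
    refine ⟨n + (N + 1) * (ℓ + 1 - n), by omega, ?_⟩
    show r (lassoIdx n ℓ (n + (N + 1) * (ℓ + 1 - n))) ∈ M.F
    have hidx : lassoIdx n ℓ (n + (N + 1) * (ℓ + 1 - n)) = n := by
      unfold lassoIdx
      have h1 : (ℓ + 1 - n) ≤ (N + 1) * (ℓ + 1 - n) := Nat.le_mul_of_pos_left _ (by omega)
      rw [if_neg (by omega), Nat.add_sub_cancel_left, Nat.mul_mod_left]
      omega
    rw [hidx]; exact hrnF
end
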